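/- Let F: Λ → ℝ^d be continuous, let I be the set of parabolic fixed points of T and A the convex hull of {F(x) : x ∈ I}. If μ ∈ M(Λ,T) satisfies ∫ F dμ = α with α ∉ A, then λ(μ,T) = ∫ log|T'| dμ > 0. -/

import Mathlib

open MeasureTheory Set Filter Topology

noncomputable section

/-- A finite measurable partition of the space. -/
def IsMeasPartition {X : Type*} [MeasurableSpace X] (P : Finset (Set X)) : Prop :=
  (∀ s ∈ P, MeasurableSet s) ∧ ((P : Set (Set X)).PairwiseDisjoint id) ∧ (⋃ s ∈ P, s) = univ

/-- Shannon entropy of the refinement `⋁_{i<n} T^{-i} P` of a finite partition `P`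
under the first `n` iterates of `T`, with respect to the measure `μ`. -/
def partEntropy {X : Type*} [MeasurableSpace X] (T : X → X) (μ : Measure X)
    (P : Finset (Set X)) (n : ℕ) : ℝ :=
  ∑ c : Fin n → {s // s ∈ P},
    Real.negMulLog (μ (⋂ i : Fin n, T^[(i : ℕ)] ⁻¹' ((c i : Set X)))).toReal

/-- The Kolmogorov–Sinai (metric) entropy of the measure `μ` for the map `T`:
the supremum over finite measurable partitions `P` of
`lim_n (1/n) H(⋁_{i<n} T^{-i}P)`, the limit being computed as an infimum (by
subadditivity of the entropy sequence). -/
def metricEntropy {X : Type*} [MeasurableSpace X] (T : X → X) (μ : Measure X) : ℝ :=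
  ⨆ P : {P : Finset (Set X) // IsMeasPartition P},
    ⨅ n : ℕ, partEntropy T μ (P : Finset (Set X)) (n + 1) / (n + 1)

/-- Birkhoff (ergodic) average `A_n f(x) = (1/n) ∑_{j<n} f(T^j x)`. -/
def birkhoff {X E : Type*} [AddCommMonoid E] [Module ℝ E]
    (T : X → X) (f : X → E) (n : ℕ) (x : X) : E :=
  (n : ℝ)⁻¹ • ∑ j ∈ Finset.range n, f (T^[j] x)

/-- The full shift space `Σ = {1,…,m}^ℕ`. -/
abbrev SymbSp (m : ℕ) := ℕ → Fin m

/-- The shift map `σ` on `Σ`. -/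
def shift {m : ℕ} (ω : SymbSp m) : SymbSp m := fun n => ω (n + 1)

/-- The set `M(Σ,σ)` of shift-invariant Borel probability measures on `Σ`. -/
def shiftInvMeasures (m : ℕ) : Set (Measure (SymbSp m)) :=
  {μ | IsProbabilityMeasure μ ∧ μ.map shift = μ}

/-- The level set `X_α = {ω ∈ Σ : lim_n A_n f(ω) = α}` of a potential `f` on `Σ`. -/
def symbLevelSet {m : ℕ} {E : Type*} [AddCommMonoid E] [Module ℝ E] [TopologicalSpace E]
    (f : SymbSp m → E) (α : E) : Set (SymbSp m) :=
  {ω | Tendsto (fun n => birkhoff shift f n ω) atTop (𝓝 α)}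

/-- A piecewise `C¹` expanding (possibly non-uniformly hyperbolic) interval map:
`m` pairwise non-overlapping subintervals `I 1, …, I m` of `[0,1]`, a map `T` which
restricted to each `I i` is a `C¹` surjection onto `[0,1]` (with derivative `T'`),
a unique fixed point `fixPt i` of `T` in each `I i`, and `T' > 1` away from the
fixed points. -/
structure PCSystem (m : ℕ) where
  hm : 0 < m
  I : Fin m → Set ℝ
  T : ℝ → ℝ
  T' : ℝ → ℝ
  fixPt : Fin m → ℝ
  hI : ∀ i, ∃ a b : ℝ, a < b ∧ I i = Icc a b
  hIsub : ∀ i, I i ⊆ Icc 0 1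
  hdisj : ∀ i j, i ≠ j → Disjoint (interior (I i)) (interior (I j))
  hTmeas : Measurable T
  hT'meas : Measurable T'
  hmapsto : ∀ i, MapsTo T (I i) (Icc 0 1)
  hsurj : ∀ i, SurjOn T (I i) (Icc 0 1)
  hderiv : ∀ i, ∀ x ∈ I i, HasDerivWithinAt T (T' x) (I i) x
  hT'cont : ∀ i, ContinuousOn T' (I i)
  hfixmem : ∀ i, fixPt i ∈ I i
  hfix : ∀ i, T (fixPt i) = fixPt i
  hfixuniq : ∀ i, ∀ y ∈ I i, T y = y → y = fixPt i
  hexp : ∀ y ∈ ⋃ i, I i, y ∉ range fixPt → 1 < T' y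

namespace PCSystem

variable {m : ℕ} (S : PCSystem m)

/-- The attractor `Λ = {x ∈ ⋃ I_i : T^n x ∈ [0,1] for all n}`. -/
def attractor : Set ℝ :=
  {x | (x ∈ ⋃ i, S.I i) ∧ ∀ n : ℕ, S.T^[n] x ∈ Icc (0:ℝ) 1}

/-- The basic interval `I_w = T_{w₁}∘⋯∘T_{wₙ}([0,1])` coded by the word `w`,
described via the forward map: `I_{i·w} = I_i ∩ T⁻¹(I_w)`. -/
def cyl (S : PCSystem m) : List (Fin m) → Set ℝ
  | [] => Icc 0 1
  | i :: w => S.I i ∩ S.T ⁻¹' (cyl S w)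

end PCSystem

/-- The word `ω₁…ωₙ` of the first `n` symbols of `ω`. -/
def word {m : ℕ} (ω : SymbSp m) (n : ℕ) : List (Fin m) := List.ofFn fun j : Fin n => ω j

namespace PCSystem

variable {m : ℕ} (S : PCSystem m)

/-- The coding map `Π : Σ → Λ`, `Π(ω) = lim_n T_{ω₁}∘⋯∘T_{ωₙ}([0,1])`
(realized as the supremum of the nested intersection `⋂_n I_{ω|_n}`, which is
a single point). -/
def code (ω : SymbSp m) : ℝ := sSup (⋂ n : ℕ, S.cyl (word ω n))

/-- The geometric potential `g(ω) = −log T'_{ω₁}(Π(σω)) = log T'(Π(ω))`. -/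
def g (ω : SymbSp m) : ℝ := Real.log (S.T' (S.code ω))

/-- `Σ̃ = {ω : liminf_n A_n g(ω) > 0}`. -/
def SigmaTilde : Set (SymbSp m) :=
  {ω | 0 < atTop.liminf fun n => birkhoff shift S.g n ω}

/-- The set `M(Λ,T)` of `T`-invariant Borel probability measures on the attractor `Λ`. -/
def invMeasures : Set (Measure ℝ) :=
  {μ | IsProbabilityMeasure μ ∧ μ.map S.T = μ ∧ μ S.attractorᶜ = 0}

/-- Lyapunov exponent `λ(μ,T) = ∫ log|T'| dμ` of a measure on the attractor. -/
def lyap (μ : Measure ℝ) : ℝ := ∫ x, Real.log |S.T' x| ∂μ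

/-- Lyapunov exponent `λ(μ,σ) = ∫ g dμ` of a measure on the shift space. -/
def lyapSymb (μ : Measure (SymbSp m)) : ℝ := ∫ ω, S.g ω ∂μ

/-- The set of parabolic fixed points, i.e. those fixed points `x_j` with `T'(x_j) = 1`. -/
def parabolicSet : Set ℝ := {y | ∃ i, y = S.fixPt i ∧ S.T' y = 1}

/-- The level set `Λ_α = {x ∈ Λ : lim_n (1/n)∑_{j<n} F(T^j x) = α}`. -/
def levelSet {E : Type*} [AddCommMonoid E] [Module ℝ E] [TopologicalSpace E]
    (F : ℝ → E) (α : E) : Set ℝ :=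
  {x | x ∈ S.attractor ∧ Tendsto (fun n => birkhoff S.T F n x) atTop (𝓝 α)}

/-- `Λ̃`: the set of points of the attractor having exactly two codings. -/
def doubleCoded : Set ℝ := {x | x ∈ S.attractor ∧ (S.code ⁻¹' {x}).ncard = 2}

end PCSystem

/-!
Since `T' ≥ 1` on `⋃ Iᵢ` (by continuity, as `T' > 1` off the finitely many fixed points), the
integrand `log |T'|` of `λ(μ,T)` is a bounded nonnegative function. If `λ(μ,T) = 0` it vanishes
`μ`-a.e., i.e. `T' = 1` `μ`-a.e., which forces `μ` to be concentrated on the finite set of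
parabolic fixed points. Then `∫ F dμ` is a convex combination of the values of `F` there.
-/

theorem integral_mem_convexHull_of_ae_mem_finite {α E : Type*} [MeasurableSpace α]
    [MeasurableSingletonClass α] [NormedAddCommGroup E] [NormedSpace ℝ E] [CompleteSpace E]
    {μ : Measure α} [IsProbabilityMeasure μ] {P : Set α} (hP : P.Finite)
    (hae : ∀ᵐ x ∂μ, x ∈ P) (F : α → E) :
    ∫ x, F x ∂μ ∈ convexHull ℝ (F '' P) := by
  lift P to Finset α using hP
  have hint : IntegrableOn F P μ := by
    rw [← Set.biUnion_of_singleton (P : Set α), integrableOn_finite_biUnion P.finite_toSet]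
    exact fun x _ => integrableOn_singleton
  have hweights : ∑ x ∈ P, μ.real {x} = 1 := by
    rw [sum_measureReal_singleton, measureReal_def,
      (prob_compl_eq_zero_iff P.measurableSet).1 (ae_iff.1 hae), ENNReal.toReal_one]
  rw [← Measure.restrict_eq_self_of_ae_mem hae, setIntegral_finset P hint]
  exact (convex_convexHull ℝ _).sum_mem (fun x _ => measureReal_nonneg) hweights
    fun x hx => subset_convexHull ℝ _ (mem_image_of_mem F hx)

theorem Set.Icc_subset_closure_Ioo_sdiff_finite {a b : ℝ} (hab : a < b) {K : Set ℝ}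
    (hK : K.Finite) : Icc a b ⊆ closure (Ioo a b \ K) := by
  rw [← closure_Ioo hab.ne, ← closure_closure (s := Ioo a b \ K)]
  exact closure_mono <|
    ((dense_univ.sdiff_finite hK).open_subset_closure_inter isOpen_Ioo).trans
      (closure_mono fun y hy => ⟨hy.1, hy.2.2⟩)

theorem ContinuousOn.le_on_Icc_of_le_off_finite {f : ℝ → ℝ} {a b c : ℝ} (hab : a < b)
    (hf : ContinuousOn f (Icc a b)) {K : Set ℝ} (hK : K.Finite)
    (h : ∀ y ∈ Icc a b \ K, c ≤ f y) {x : ℝ} (hx : x ∈ Icc a b) : c ≤ f x :=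
  ContinuousWithinAt.closure_le (Icc_subset_closure_Ioo_sdiff_finite hab hK hx)
    continuousWithinAt_const ((hf x hx).mono (sdiff_subset.trans Ioo_subset_Icc_self))
    fun y hy => h y ⟨Ioo_subset_Icc_self hy.1, hy.2⟩

namespace PCSystem

variable {m : ℕ} (S : PCSystem m)

theorem isCompact_I (i : Fin m) : IsCompact (S.I i) := by
  obtain ⟨a, b, -, hI⟩ := S.hI i
  exact hI ▸ isCompact_Icc

theorem one_le_T' {x : ℝ} (hx : x ∈ ⋃ i, S.I i) : 1 ≤ S.T' x := by
  obtain ⟨i, hxi⟩ := mem_iUnion.1 hx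
  obtain ⟨a, b, hab, hI⟩ := S.hI i
  rw [hI] at hxi
  exact ContinuousOn.le_on_Icc_of_le_off_finite hab (hI ▸ S.hT'cont i) (finite_range S.fixPt)
    (fun y hy => (S.hexp y (mem_iUnion.2 ⟨i, hI ▸ hy.1⟩) hy.2).le) hxi

theorem bddAbove_T' : BddAbove (S.T' '' ⋃ i, S.I i) := by
  have := (finite_univ (α := Fin m)).bddAbove_biUnion.2 fun i _ =>
    (S.isCompact_I i).bddAbove_image (S.hT'cont i)
  rwa [biUnion_univ, ← image_iUnion] at this

theorem parabolicSet_finite : S.parabolicSet.Finite :=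
  (finite_range S.fixPt).subset fun _ ⟨i, hy, _⟩ => ⟨i, hy.symm⟩

theorem mem_parabolicSet_of_T'_eq_one {x : ℝ} (hx : x ∈ ⋃ i, S.I i) (h1 : S.T' x = 1) :
    x ∈ S.parabolicSet := by
  by_cases hfix : x ∈ range S.fixPt
  · obtain ⟨i, rfl⟩ := hfix
    exact ⟨i, rfl, h1⟩
  · exact absurd h1 (S.hexp x hx hfix).ne'

theorem integrable_log_abs_T' {μ : Measure ℝ} [IsFiniteMeasure μ]
    (hae : ∀ᵐ x ∂μ, x ∈ ⋃ i, S.I i) : Integrable (fun x => Real.log |S.T' x|) μ := by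
  obtain ⟨C, hC⟩ := S.bddAbove_T'
  refine Integrable.of_bound (Real.measurable_log.comp S.hT'meas.abs).aestronglyMeasurable
    (Real.log C) ?_
  filter_upwards [hae] with x hx
  have h1 := S.one_le_T' hx
  rw [abs_of_pos (one_pos.trans_le h1), Real.norm_of_nonneg (Real.log_nonneg h1)]
  exact Real.log_le_log (one_pos.trans_le h1) (hC (mem_image_of_mem _ hx))

theorem lyap_pos_of_not_ae_mem_parabolicSet {μ : Measure ℝ} [IsFiniteMeasure μ]
    (hae : ∀ᵐ x ∂μ, x ∈ ⋃ i, S.I i) (hpar : ¬ ∀ᵐ x ∂μ, x ∈ S.parabolicSet) :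
    0 < S.lyap μ := by
  have hnonneg : 0 ≤ᵐ[μ] fun x => Real.log |S.T' x| :=
    hae.mono fun x hx => Real.log_nonneg ((S.one_le_T' hx).trans (le_abs_self _))
  refine (integral_nonneg_of_ae hnonneg).lt_of_ne fun hzero => hpar ?_
  have hae_zero := (integral_eq_zero_iff_of_nonneg_ae hnonneg (S.integrable_log_abs_T' hae)).1
    hzero.symm
  filter_upwards [hae_zero, hae] with x hx0 hx
  have hpos : 0 < S.T' x := one_pos.trans_le (S.one_le_T' hx)
  refine S.mem_parabolicSet_of_T'_eq_one hx (Real.eq_one_of_pos_of_log_eq_zero hpos ?_)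
  simpa [abs_of_pos hpos] using hx0

end PCSystem

theorem statement13_general {m d : ℕ} (S : PCSystem m)
    (F : ℝ → EuclideanSpace ℝ (Fin d))
    (μ : Measure ℝ) (hμ : μ ∈ S.invMeasures)
    (α : EuclideanSpace ℝ (Fin d)) (hint : (∫ x, F x ∂μ) = α)
    (hαA : α ∉ convexHull ℝ (F '' S.parabolicSet)) :
    0 < S.lyap μ := by
  obtain ⟨hprob, -, hnull⟩ := hμ
  have hae : ∀ᵐ x ∂μ, x ∈ ⋃ i, S.I i := (ae_iff.2 hnull).mono fun x hx => hx.1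
  refine S.lyap_pos_of_not_ae_mem_parabolicSet hae fun hpar => hαA ?_
  rw [← hint]
  exact integral_mem_convexHull_of_ae_mem_finite S.parabolicSet_finite hpar F

/-- If `μ ∈ M(Λ,T)` satisfies `∫ F dμ = α` with `α ∉ A`, then
`λ(μ,T) = ∫ log|T'| dμ > 0`. -/
theorem statement13 {m d : ℕ} (S : PCSystem m)
    (F : ℝ → EuclideanSpace ℝ (Fin d)) (hF : ContinuousOn F S.attractor)
    (μ : Measure ℝ) (hμ : μ ∈ S.invMeasures)
    (α : EuclideanSpace ℝ (Fin d)) (hint : (∫ x, F x ∂μ) = α)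
    (hαA : α ∉ convexHull ℝ (F '' S.parabolicSet)) :
    0 < S.lyap μ :=
  statement13_general S F μ hμ α hint hαA
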